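/- Let m_2, m_3 be positive integers. Then c_{2m_2}^{m_2,m_3} > 0. -/
import Mathlib


/-- `P k = (k+1/2)(k-1/2)⋯(3/2)(1/2) = (2k+1)!!/2^(k+1)`. -/
noncomputable def P (k : ℕ) : ℝ := ∏ i ∈ Finset.range (k + 1), ((i : ℝ) + 1 / 2)

/-- The combinatorial coefficient `c_p^{m₂,m₃}` from the paper. -/
noncomputable def c (m2 m3 p : ℕ) : ℝ :=
  (∑ i ∈ Finset.Icc (p - m2) (min m2 p),
      ((2 : ℝ) ^ (2 * i) * P (m3 + i)
            / ((Nat.factorial (2 * i)) * (Nat.factorial (m2 - i)))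
        - P (m3 - 1) / (2 * (Nat.factorial i) * (Nat.factorial (m2 - i)))) *
      ((2 : ℝ) ^ (2 * (p : ℤ) - 2 * (i : ℤ) - 1)
            * (2 * (m2 : ℝ) + 2 * (i : ℝ) - 2 * (p : ℝ) + 1) * P (m3 + p - i - 1)
            / ((Nat.factorial (2 * p - 2 * i)) * (Nat.factorial (m2 + i - p)))
        - P (m3 - 1) / (2 * (Nat.factorial (p - i)) * (Nat.factorial (m2 + i - p)))))
  - ∑ i ∈ Finset.Ico (p - m2) (min m2 p),
      (2 : ℝ) ^ (2 * p) * P (m3 + i) * P (m3 + p - i - 1)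
        / ((Nat.factorial (2 * i + 1)) * (Nat.factorial (2 * p - 2 * i - 1))
            * (Nat.factorial (m2 - i - 1)) * (Nat.factorial (m2 + i - p)))

lemma P_pos (k : ℕ) : 0 < P k := Finset.prod_pos (fun i _ => by positivity)

lemma P_succ (k : ℕ) : P (k+1) = P k * ((k:ℝ) + 1 + 1/2) := by
  simp [P, Finset.prod_range_succ]

lemma key (n m : ℕ) (hm : 1 ≤ m) :
    ((Nat.factorial (2*m) : ℝ)) * P n < 2^(2*m) * (Nat.factorial m) * P (n+m) := by
  induction m with
  | zero => omega
  | succ m ih =>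
    rcases Nat.eq_zero_or_pos m with h0 | h1
    · subst h0
      have := P_pos n
      simp [Nat.factorial, P_succ]
      nlinarith [Nat.cast_nonneg (α := ℝ) n]
    · have IH := ih h1
      have h2 : 2*(m+1) = 2*m + 1 + 1 := by ring
      rw [h2, Nat.factorial_succ, Nat.factorial_succ, Nat.factorial_succ]
      have hP : P (n + (m+1)) = P (n+m) * ((n:ℝ)+(m:ℝ)+1+1/2) := by
        rw [show n + (m+1) = (n+m)+1 from rfl, P_succ]; push_cast; ring
      rw [hP]
      have hpow : (2:ℝ)^(2*m+1+1) = 4 * 2^(2*m) := by ring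
      rw [hpow]
      push_cast
      have hPn := P_pos n
      have hPnm := P_pos (n+m)
      have hfac : (0:ℝ) < (Nat.factorial (2*m) : ℝ) := by positivity
      have hfacm : (0:ℝ) < (Nat.factorial m : ℝ) := by positivity
      have hpow2 : (0:ℝ) < 2^(2*m) := by positivity
      have hQ : (0:ℝ) < 2^(2*m)*(Nat.factorial m:ℝ)*P (n+m) := by positivity
      have hn0 := Nat.cast_nonneg (α := ℝ) n
      have step2 : (2*(m:ℝ)+1+1)*(2*(m:ℝ)+1) ≤ 4*(((m:ℝ)+1)*((n:ℝ)+(m:ℝ)+1+1/2)) := by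
        nlinarith
      nlinarith [mul_le_mul_of_nonneg_right step2 hQ.le,
        mul_lt_mul_of_pos_left IH (show (0:ℝ) < (2*(m:ℝ)+1+1)*(2*(m:ℝ)+1) by positivity)]

theorem stmt_7 (m2 m3 : ℕ) (hm2 : 1 ≤ m2) (hm3 : 1 ≤ m3) :
    0 < c m2 m3 (2 * m2) := by
  obtain ⟨n, rfl⟩ : ∃ n, m3 = n + 1 := ⟨m3 - 1, by omega⟩
  unfold c
  rw [show 2*m2 - m2 = m2 from by omega, show min m2 (2*m2) = m2 from by omega,
    Finset.Icc_self, Finset.sum_singleton, Finset.Ico_self, Finset.sum_empty, sub_zero]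
  rw [show m2 - m2 = 0 from by omega, show 2*(2*m2) - 2*m2 = 2*m2 from by omega,
    show m2 + m2 - 2*m2 = 0 from by omega, show 2*m2 - m2 = m2 from by omega,
    show n + 1 + 2*m2 - m2 - 1 = n + m2 from by omega, show n + 1 - 1 = n from rfl,
    show n + 1 + m2 = n + m2 + 1 from by omega]
  norm_num [Nat.factorial_zero]
  have hz : (2:ℝ)^(2*(2*(m2:ℤ)) - 2*(m2:ℤ) - 1) = 2^(2*m2)/2 := by
    rw [show 2*(2*(m2:ℤ)) - 2*(m2:ℤ) - 1 = ((2*m2:ℕ):ℤ) - 1 from by push_cast; ring,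
      zpow_sub₀ (by norm_num : (2:ℝ) ≠ 0), zpow_natCast, zpow_one]
  rw [hz, show (2*(m2:ℝ) + 2*(m2:ℝ) - 2*(2*(m2:ℝ)) + 1) = 1 from by ring, mul_one]
  have hkey := key n m2 hm2
  have hf2 : (0:ℝ) < (Nat.factorial (2*m2):ℝ) := by positivity
  have hfm : (0:ℝ) < (Nat.factorial m2:ℝ) := by positivity
  have hPn := P_pos n
  have hPnm := P_pos (n+m2)
  have hn0 := Nat.cast_nonneg (α := ℝ) n
  have hm0 := Nat.cast_nonneg (α := ℝ) m2
  have hPs : P (n+m2+1) = P (n+m2) * ((n:ℝ)+(m2:ℝ)+1+1/2) := by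
    rw [P_succ]; push_cast; ring
  have hp2 : (0:ℝ) < 2^(2*m2) := by positivity
  apply mul_pos
  · rw [sub_pos, div_lt_div_iff₀ (by positivity) hf2, hPs]
    nlinarith [mul_pos hp2 (mul_pos hfm hPnm)]
  · rw [sub_pos, div_lt_div_iff₀ (by positivity) hf2]
    nlinarith
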